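/- arXiv:1908.02259 — 2 statements merged into one kernel-verified Lean document; each statement's English description precedes it below -/
import Mathlib

section
/- If (f_n) is a sequence in C⁰[0,1] converging uniformly to f, then every accumulation point (in uniform norm) of the sequence (Conj(f_n)) is of the form Ψ_a(Conj(f)) for some a ∈ argmin(Conj(f)); equivalently, accumulation points lie in the same pointed tree class as Conj(f). -/
noncomputable def mf (f : ℝ → ℝ) : ℝ := sInf (f '' Set.Icc 0 1)

noncomputable def af (f : ℝ → ℝ) : ℝ := sInf {x | x ∈ Set.Icc (0:ℝ) 1 ∧ f x = mf f}

noncomputable def Conj (f : ℝ → ℝ) : ℝ → ℝ := fun x => f (Int.fract (af f + x)) - mf f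

noncomputable def Psi (a : ℝ) (g : ℝ → ℝ) : ℝ → ℝ := fun x => g (Int.fract (x + a)) - g a

open Set Filter Topology

lemma fract_mem_Icc (y : ℝ) : Int.fract y ∈ Set.Icc (0:ℝ) 1 :=
  ⟨Int.fract_nonneg y, (Int.fract_lt_one y).le⟩

lemma fract_add_fract' (c t : ℝ) : Int.fract (c + Int.fract t) = Int.fract (c + t) := by
  have h : c + Int.fract t = (c + t) - (⌊t⌋ : ℝ) := by unfold Int.fract; ring
  rw [h, Int.fract_sub_intCast]

lemma g_fract_eq {g : ℝ → ℝ} (h01 : g 0 = g 1) {a : ℝ} (ha : a ∈ Set.Icc (0:ℝ) 1) :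
    g (Int.fract a) = g a := by
  rcases eq_or_lt_of_le ha.2 with h1 | h1
  · rw [h1, Int.fract_one, h01]
  · rw [Int.fract_eq_self.mpr ⟨ha.1, h1⟩]

lemma mf_le {g : ℝ → ℝ} (hc : ContinuousOn g (Set.Icc 0 1)) {x : ℝ}
    (hx : x ∈ Set.Icc (0:ℝ) 1) : mf g ≤ g x :=
  csInf_le (isCompact_Icc.image_of_continuousOn hc).bddBelow ⟨x, hx, rfl⟩

lemma exists_min {g : ℝ → ℝ} (hc : ContinuousOn g (Set.Icc 0 1)) :
    ∃ x ∈ Set.Icc (0:ℝ) 1, g x = mf g := by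
  obtain ⟨x, hx, hmin⟩ := isCompact_Icc.exists_isMinOn ⟨0, by norm_num⟩ hc
  refine ⟨x, hx, le_antisymm ?_ (mf_le hc hx)⟩
  refine le_csInf ⟨g x, ⟨x, hx, rfl⟩⟩ ?_
  rintro y ⟨z, hz, rfl⟩
  exact hmin hz

lemma af_spec {g : ℝ → ℝ} (hc : ContinuousOn g (Set.Icc 0 1)) :
    af g ∈ Set.Icc (0:ℝ) 1 ∧ g (af g) = mf g := by
  obtain ⟨x, hx, hxm⟩ := exists_min hc
  have hset : {x | x ∈ Set.Icc (0:ℝ) 1 ∧ g x = mf g} = Set.Icc 0 1 ∩ g ⁻¹' {mf g} := by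
    ext y; simp [Set.mem_inter_iff, Set.mem_preimage]
  have hSc : IsClosed {x | x ∈ Set.Icc (0:ℝ) 1 ∧ g x = mf g} := by
    rw [hset]
    exact hc.preimage_isClosed_of_isClosed isClosed_Icc isClosed_singleton
  have hScpt : IsCompact {x | x ∈ Set.Icc (0:ℝ) 1 ∧ g x = mf g} :=
    IsCompact.of_isClosed_subset isCompact_Icc hSc (fun y hy => hy.1)
  have := hScpt.sInf_mem ⟨x, hx, hxm⟩
  exact this

/-- if `f_n → f` uniformly on `[0,1]` (all in `C⁰[0,1]`), then every uniform
accumulation point `h` of `(Conj f_n)` is of the form `Ψ_a(Conj f)` for some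
`a ∈ argmin (Conj f)`, i.e. it lies in the pointed tree class of `Conj f`. -/
theorem Conj_accumulation_points (f : ℝ → ℝ) (fn : ℕ → ℝ → ℝ) (h : ℝ → ℝ) (φ : ℕ → ℕ)
    (hfc : ContinuousOn f (Set.Icc 0 1)) (hf0 : f 0 = 0) (hf1 : f 1 = 0)
    (hfnc : ∀ n, ContinuousOn (fn n) (Set.Icc 0 1))
    (hfn0 : ∀ n, fn n 0 = 0) (hfn1 : ∀ n, fn n 1 = 0)
    (hφ : StrictMono φ)
    (hconv : TendstoUniformlyOn fn f Filter.atTop (Set.Icc 0 1))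
    (hacc : TendstoUniformlyOn (fun k => Conj (fn (φ k))) h Filter.atTop (Set.Icc 0 1)) :
    ∃ a ∈ Set.Icc (0:ℝ) 1,
      Conj f a = sInf (Conj f '' Set.Icc 0 1) ∧
      ∀ x ∈ Set.Icc (0:ℝ) 1, h x = Psi a (Conj f) x := by
  have hf01 : f 0 = f 1 := hf0.trans hf1.symm
  have hfn01 : ∀ n, fn n 0 = fn n 1 := fun n => (hfn0 n).trans (hfn1 n).symm
  -- mf (fn n) → mf f
  obtain ⟨x0, hx0I, hx0m⟩ := exists_min hfc
  have hm : Tendsto (fun n => mf (fn n)) atTop (𝓝 (mf f)) := by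
    rw [Metric.tendsto_atTop]
    intro ε hε
    have hev := Metric.tendstoUniformlyOn_iff.mp hconv (ε/2) (by linarith)
    obtain ⟨N, hN⟩ := eventually_atTop.mp hev
    refine ⟨N, fun n hn => ?_⟩
    have hup : mf (fn n) ≤ mf f + ε/2 := by
      have h1 : mf (fn n) ≤ fn n x0 := mf_le (hfnc n) hx0I
      have h2 := hN n hn x0 hx0I
      rw [Real.dist_eq] at h2
      rw [← hx0m]
      have := abs_sub_lt_iff.mp h2
      linarith [this.1, this.2]
    have hlo : mf f - ε/2 ≤ mf (fn n) := by
      refine le_csInf ⟨fn n 0, ⟨0, by norm_num, rfl⟩⟩ ?_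
      rintro y ⟨z, hz, rfl⟩
      have h2 := hN n hn z hz
      rw [Real.dist_eq] at h2
      have h3 := mf_le hfc hz
      have := abs_sub_lt_iff.mp h2
      linarith [this.1, this.2]
    rw [Real.dist_eq]
    rw [abs_sub_lt_iff]
    constructor <;> linarith
  -- subsequence of argmins
  have haS : ∀ n, af (fn n) ∈ Set.Icc (0:ℝ) 1 ∧ fn n (af (fn n)) = mf (fn n) :=
    fun n => af_spec (hfnc n)
  obtain ⟨astar, hastarI, ψ, hψ, hψt⟩ :=
    isCompact_Icc.tendsto_subseq (x := fun k => af (fn (φ k))) (fun k => (haS (φ k)).1)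
  set σ : ℕ → ℕ := fun k => φ (ψ k) with hσdef
  have hσt : Tendsto σ atTop atTop := (hφ.comp hψ).tendsto_atTop
  have hFc : Continuous (f ∘ Int.fract) := hfc.comp_fract'' hf01
  -- key pointwise convergence
  have key : ∀ x : ℝ,
      Tendsto (fun k => fn (σ k) (Int.fract (af (fn (σ k)) + x))) atTop
        (𝓝 (f (Int.fract (astar + x)))) := by
    intro x
    rw [Metric.tendsto_nhds]
    intro ε hε
    have hat : Tendsto (fun k => af (fn (σ k)) + x) atTop (𝓝 (astar + x)) := by
      exact hψt.add_const x
    have h1 : Tendsto (fun k => (f ∘ Int.fract) (af (fn (σ k)) + x)) atTop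
        (𝓝 ((f ∘ Int.fract) (astar + x))) := (hFc.tendsto _).comp hat
    have h1' := Metric.tendsto_nhds.mp h1 (ε/2) (by linarith)
    have h2 : ∀ᶠ k in atTop,
        dist (fn (σ k) (Int.fract (af (fn (σ k)) + x)))
          (f (Int.fract (af (fn (σ k)) + x))) < ε/2 := by
      have hev := Metric.tendstoUniformlyOn_iff.mp hconv (ε/2) (by linarith)
      filter_upwards [hσt.eventually hev] with k hk
      rw [dist_comm]
      exact hk _ (fract_mem_Icc _)
    filter_upwards [h1', h2] with k hk1 hk2
    calc dist (fn (σ k) (Int.fract (af (fn (σ k)) + x))) (f (Int.fract (astar + x)))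
        ≤ dist (fn (σ k) (Int.fract (af (fn (σ k)) + x)))
            (f (Int.fract (af (fn (σ k)) + x)))
          + dist (f (Int.fract (af (fn (σ k)) + x))) (f (Int.fract (astar + x))) :=
          dist_triangle _ _ _
      _ < ε/2 + ε/2 := add_lt_add hk2 hk1
      _ = ε := by ring
  have hm' : Tendsto (fun k => mf (fn (σ k))) atTop (𝓝 (mf f)) := hm.comp hσt
  -- identify h
  have hhx : ∀ x ∈ Set.Icc (0:ℝ) 1, h x = f (Int.fract (astar + x)) - mf f := by
    intro x hx
    have h1 : Tendsto (fun k => Conj (fn (σ k)) x) atTop (𝓝 (h x)) :=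
      (hacc.tendsto_at hx).comp hψ.tendsto_atTop
    have h2 : Tendsto (fun k => Conj (fn (σ k)) x) atTop
        (𝓝 (f (Int.fract (astar + x)) - mf f)) := by
      have := (key x).sub hm'
      exact this
    exact tendsto_nhds_unique h1 h2
  -- f (fract astar) = mf f
  have hstar : f (Int.fract astar) = mf f := by
    have h2 := key 0
    have heq : (fun k => fn (σ k) (Int.fract (af (fn (σ k)) + 0))) =
        fun k => mf (fn (σ k)) := by
      funext k
      rw [add_zero, g_fract_eq (hfn01 (σ k)) (haS (σ k)).1, (haS (σ k)).2]
    rw [heq, add_zero] at h2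
    exact (tendsto_nhds_unique h2 hm')
  -- the point a
  refine ⟨Int.fract (astar - af f), fract_mem_Icc _, ?_, ?_⟩
  · -- Conj f a = sInf image
    have hConja : Conj f (Int.fract (astar - af f)) = 0 := by
      show f (Int.fract (af f + Int.fract (astar - af f))) - mf f = 0
      rw [fract_add_fract', show af f + (astar - af f) = astar by ring, hstar]
      ring
    have hlb : ∀ y ∈ Conj f '' Set.Icc 0 1, (0:ℝ) ≤ y := by
      rintro y ⟨x, hx, rfl⟩
      have := mf_le hfc (fract_mem_Icc (af f + x))
      show (0:ℝ) ≤ f (Int.fract (af f + x)) - mf f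
      linarith
    have : sInf (Conj f '' Set.Icc 0 1) = 0 := by
      apply le_antisymm
      · calc sInf (Conj f '' Set.Icc 0 1) ≤ Conj f (Int.fract (astar - af f)) :=
            csInf_le ⟨0, hlb⟩ ⟨_, fract_mem_Icc _, rfl⟩
          _ = 0 := hConja
      · exact le_csInf ⟨_, ⟨0, by norm_num, rfl⟩⟩ hlb
    rw [this, hConja]
  · intro x hx
    rw [hhx x hx]
    have hConja : Conj f (Int.fract (astar - af f)) = 0 := by
      show f (Int.fract (af f + Int.fract (astar - af f))) - mf f = 0
      rw [fract_add_fract', show af f + (astar - af f) = astar by ring, hstar]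
      ring
    show f (Int.fract (astar + x)) - mf f =
      Conj f (Int.fract (x + Int.fract (astar - af f))) - Conj f (Int.fract (astar - af f))
    rw [hConja, sub_zero]
    show f (Int.fract (astar + x)) - mf f =
      f (Int.fract (af f + Int.fract (x + Int.fract (astar - af f)))) - mf f
    rw [fract_add_fract',
      show af f + (x + Int.fract (astar - af f)) = (af f + x) + Int.fract (astar - af f) by ring,
      fract_add_fract', show af f + x + (astar - af f) = astar + x by ring]
end

section
/- For a planar tree T, for any p and any k with m_T(p) ≤ k ≤ m_T(p+1) − 1, the contour process satisfies H_T(p+1) − 1 ≤ C_T(k) ≤ H_T(p), where C_T(k) = |c_T(k)| is the height of the k-th vertex visited by the depth-first traversal and m_T(p) is the first visit time of the p-th vertex (in lexicographic order). -/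
/-- A rooted planar tree: a finite, prefix-closed set of words on `ℕ` containing the
empty word, closed under taking smaller siblings. -/
def IsPlanarTree (T : Finset (List ℕ)) : Prop :=
  ([] ∈ T) ∧
  (∀ u ∈ T, ∀ v : List ℕ, v <+: u → v ∈ T) ∧
  (∀ (u : List ℕ) (i : ℕ), u ++ [i] ∈ T → ∀ j < i, u ++ [j] ∈ T)

/-- The `k`-th vertex of `T` in lexicographic order. -/
noncomputable def vtx (T : Finset (List ℕ)) (k : ℕ) : List ℕ :=
  (T.sort (· ≤ ·)).getD k []

/-- The height sequence: `HT T k` is the depth of the `k`-th vertex in lex. order. -/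
noncomputable def HT (T : Finset (List ℕ)) (k : ℕ) : ℕ := (vtx T k).length

/-- `c : ℕ → List ℕ` is the depth-first traversal of `T`: it starts at the root; from
the current vertex it moves to the lexicographically smallest unvisited child if any,
and otherwise back to the parent. -/
def IsDFS (T : Finset (List ℕ)) (c : ℕ → List ℕ) : Prop :=
  c 0 = [] ∧
  ∀ j : ℕ, j < 2 * (T.card - 1) →
    (((∃ v ∈ T, (∃ i : ℕ, v = c j ++ [i]) ∧ ∀ i ≤ j, c i ≠ v) →
        (c (j+1) ∈ T ∧ (∃ i : ℕ, c (j+1) = c j ++ [i]) ∧ (∀ i ≤ j, c i ≠ c (j+1)) ∧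
          ∀ v ∈ T, (∃ i : ℕ, v = c j ++ [i]) → (∀ i ≤ j, c i ≠ v) → c (j+1) ≤ v)) ∧
     ((¬ ∃ v ∈ T, (∃ i : ℕ, v = c j ++ [i]) ∧ ∀ i ≤ j, c i ≠ v) →
        c (j+1) = (c j).dropLast))

/-- `mT T c k` : the first visit time of the `k`-th vertex (in lex. order) by the
depth-first traversal `c`. -/
noncomputable def mT (T : Finset (List ℕ)) (c : ℕ → List ℕ) (k : ℕ) : ℕ :=
  sInf {j : ℕ | c j = vtx T k}

/-!
At time `j` the traversal has visited exactly the vertices of `T` lexicographically up to the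
largest vertex `m` visited so far; the current vertex `c j` is an ancestor of `m`, and every
vertex beyond `m` lies above a child, beyond `m`, of an ancestor of `c j`. Each edge between
visited vertices has been crossed twice, except those on the current path, crossed once; this
count shows that every vertex is visited within `2 (|T| - 1)` steps.

Between the first visits of `u_p` and `u_{p+1}`, the largest visited vertex is therefore `u_p`,
so `c k` is an ancestor of `u_p`, while `u_{p+1}`, the vertex following `u_p`, is a child of an
ancestor of `c k`.
-/

namespace List

theorem IsPrefix.prefix_dropLast {α : Type*} {q l : List α} (h : q <+: l) (hne : q ≠ l) :
    q <+: l.dropLast := by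
  have hl : l ≠ [] := by
    rintro rfl
    exact hne (prefix_nil.mp h)
  rw [← dropLast_append_getLast hl, prefix_concat_iff, dropLast_append_getLast hl] at h
  exact h.resolve_left hne

variable {α : Type*} [LinearOrder α]

theorem nil_le' (l : List α) : [] ≤ l :=
  not_lt.mp (not_lt_nil l)

theorem IsPrefix.le' {l₁ l₂ : List α} (h : l₁ <+: l₂) : l₁ ≤ l₂ :=
  not_lt.mp h.le

theorem prefix_of_le_of_lt_append {q m l : List α} (hqm : q ≤ m) (hm : m < q ++ l) :
    q <+: m := by
  induction q generalizing m with
  | nil => exact nil_prefix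
  | cons a q ih =>
    cases m with
    | nil => exact absurd hqm (not_le.mpr (nil_lt_cons a q))
    | cons b m =>
      rw [← not_lt, cons_lt_cons_iff, not_or, not_and] at hqm
      rw [cons_append, cons_lt_cons_iff] at hm
      obtain hba | ⟨rfl, hm⟩ := hm
      · exact absurd hba hqm.1
      · exact cons_prefix_cons.mpr ⟨rfl, ih (not_lt.mp (hqm.2 rfl)) hm⟩

theorem append_cons_lt_append_singleton_iff {q u : List α} {t s : α} :
    q ++ t :: u < q ++ [s] ↔ t < s := by
  induction q with
  | nil => simp [cons_lt_cons_iff, not_lt_nil]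
  | cons a q ih => simpa [cons_lt_cons_iff] using ih

theorem append_lt_of_lt_append_singleton {q x m : List α} {s : α} (l : List α) (hqx : q <+: x)
    (hne : q ≠ x) (hxm : x <+: m) (hm : m < q ++ [s]) : x ++ l < q ++ [s] := by
  obtain ⟨_ | ⟨t, r⟩, rfl⟩ := hqx
  · simp at hne
  obtain ⟨r', rfl⟩ := hxm
  simp only [append_assoc, cons_append] at hm ⊢
  exact append_cons_lt_append_singleton_iff.mpr (append_cons_lt_append_singleton_iff.mp hm)

end List

theorem Finset.card_filter_le_eq_add_one {α : Type*} [LinearOrder α] {T : Finset α} {m v : α}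
    (hv : v ∈ T) (hmv : m < v) (hsucc : ∀ w ∈ T, m < w → v ≤ w) :
    (T.filter (· ≤ v)).card = (T.filter (· ≤ m)).card + 1 := by
  have hinsert : T.filter (· ≤ v) = insert v (T.filter (· ≤ m)) := by
    ext w
    simp only [mem_filter, mem_insert]
    constructor
    · rintro ⟨hw, hwv⟩
      by_cases hwm : w ≤ m
      · exact Or.inr ⟨hw, hwm⟩
      · exact Or.inl (le_antisymm hwv (hsucc w hw (not_le.mp hwm)))
    · rintro (rfl | ⟨hw, hwm⟩)
      · exact ⟨hv, le_rfl⟩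
      · exact ⟨hw, hwm.trans hmv.le⟩
  rw [hinsert, card_insert_of_notMem (fun h => (mem_filter.mp h).2.not_gt hmv)]

theorem exists_prefix_child_between {α : Type*} [LinearOrder α] {T : Finset (List α)}
    (hT : ∀ u ∈ T, ∀ v : List α, v <+: u → v ∈ T) {m w : List α} (hw : w ∈ T) (hmw : m < w) :
    ∃ q s, q <+: m ∧ q ++ [s] ∈ T ∧ m < q ++ [s] ∧ q ++ [s] ≤ w := by
  induction w using List.reverseRecOn with
  | nil => exact absurd hmw (not_lt.mpr (List.nil_le' m))
  | append_singleton q s ih =>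
    by_cases hmq : m < q
    · obtain ⟨q', s', hq'm, hq's, hmq', hq'q⟩ := ih (hT _ hw q (List.prefix_append q [s])) hmq
      exact ⟨q', s', hq'm, hq's, hmq', hq'q.trans (List.prefix_append q [s]).le'⟩
    · exact ⟨q, s, List.prefix_of_le_of_lt_append (not_lt.mp hmq) hmw, hw, hmw, le_rfl⟩

section LexOrder

variable {T : Finset (List ℕ)} {k : ℕ}

theorem vtx_eq_orderEmbOfFin (hk : k < T.card) : vtx T k = T.orderEmbOfFin rfl ⟨k, hk⟩ := by
  rw [Finset.orderEmbOfFin_apply]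
  exact List.getD_eq_getElem _ _ _

theorem vtx_mem (hk : k < T.card) : vtx T k ∈ T := by
  rw [vtx_eq_orderEmbOfFin hk]
  exact Finset.orderEmbOfFin_mem _ _ _

theorem vtx_lt_vtx_succ (hk : k + 1 < T.card) : vtx T k < vtx T (k + 1) := by
  rw [vtx_eq_orderEmbOfFin hk, vtx_eq_orderEmbOfFin (by omega), OrderEmbedding.lt_iff_lt]
  exact Fin.mk_lt_mk.mpr k.lt_succ_self

theorem vtx_succ_le_of_vtx_lt (hk : k + 1 < T.card) {w : List ℕ} (hw : w ∈ T)
    (hlt : vtx T k < w) : vtx T (k + 1) ≤ w := by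
  obtain ⟨i, rfl⟩ : w ∈ Set.range (T.orderEmbOfFin rfl) := by
    rw [Finset.range_orderEmbOfFin]
    exact hw
  rw [vtx_eq_orderEmbOfFin (by omega), OrderEmbedding.lt_iff_lt] at hlt
  rw [vtx_eq_orderEmbOfFin hk, OrderEmbedding.le_iff_le]
  exact hlt

end LexOrder

def HasUnvisitedChild (T : Finset (List ℕ)) (c : ℕ → List ℕ) (j : ℕ) : Prop :=
  ∃ v ∈ T, (∃ i : ℕ, v = c j ++ [i]) ∧ ∀ i ≤ j, c i ≠ v

structure DFSState (T : Finset (List ℕ)) (c : ℕ → List ℕ) (j : ℕ) (m : List ℕ) : Prop where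
  mem : m ∈ T
  visited_le : ∀ i ≤ j, c i ≤ m
  visited_of_le : ∀ w ∈ T, w ≤ m → ∃ i ≤ j, c i = w
  prefix_max : c j <+: m
  prefix_of_child_gt : ∀ q s, q <+: m → q ++ [s] ∈ T → m < q ++ [s] → q <+: c j
  card : j + (c j).length + 2 = 2 * (T.filter (· ≤ m)).card

namespace DFSState

variable {T : Finset (List ℕ)} {c : ℕ → List ℕ} {j : ℕ} {m : List ℕ}

theorem exists_child_between (h : DFSState T c j m) (hT : IsPlanarTree T) {w : List ℕ}
    (hw : w ∈ T) (hmw : m < w) :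
    ∃ q s, q <+: c j ∧ q ++ [s] ∈ T ∧ m < q ++ [s] ∧ q ++ [s] ≤ w := by
  obtain ⟨q, s, hqm, hqs, hmq, hqw⟩ := exists_prefix_child_between hT.2.1 hw hmw
  exact ⟨q, s, h.prefix_of_child_gt q s hqm hqs hmq, hqs, hmq, hqw⟩

theorem zero (hT : IsPlanarTree T) (hc : IsDFS T c) : DFSState T c 0 [] where
  mem := hT.1
  visited_le i hi := by
    obtain rfl := Nat.le_zero.mp hi
    rw [hc.1]
  visited_of_le w _ hw := ⟨0, le_rfl, by rw [hc.1, le_antisymm hw (List.nil_le' w)]⟩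
  prefix_max := by rw [hc.1]
  prefix_of_child_gt q _ hq _ _ := by rwa [hc.1]
  card := by
    have hroot : T.filter (· ≤ []) = {[]} := by
      ext w
      simp only [Finset.mem_filter, Finset.mem_singleton]
      exact ⟨fun hw => le_antisymm hw.2 (List.nil_le' w), by rintro rfl; exact ⟨hT.1, le_rfl⟩⟩
    simp [hc.1, hroot]

theorem succ_of_hasUnvisitedChild (h : DFSState T c j m) (hT : IsPlanarTree T)
    (hc : IsDFS T c) (hj : j < 2 * (T.card - 1)) (hex : HasUnvisitedChild T c j) :
    DFSState T c (j + 1) (c (j + 1)) := by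
  obtain ⟨hvT, ⟨sv, hv⟩, hunvisited, hmin⟩ := (hc.2 j hj).1 hex
  have hmv : m < c (j + 1) := by
    by_contra! hvm
    obtain ⟨i, hi, hci⟩ := h.visited_of_le _ hvT hvm
    exact hunvisited i hi hci
  have hsucc : ∀ w ∈ T, m < w → c (j + 1) ≤ w := by
    intro w hw hmw
    obtain ⟨q, s, hq, hqs, hmq, hqw⟩ := h.exists_child_between hT hw hmw
    refine le_trans ?_ hqw
    by_cases hqj : q = c j
    · subst hqj
      exact hmin _ hqs ⟨s, rfl⟩ fun i hi hci => (hci ▸ h.visited_le i hi).not_gt hmq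
    · rw [hv]
      exact (List.append_lt_of_lt_append_singleton [sv] hq hqj h.prefix_max hmq).le
  refine ⟨hvT, fun i hi => ?_, fun w hw hwv => ?_, List.prefix_rfl, fun q _ hq _ _ => hq, ?_⟩
  · rcases Nat.le_add_one_iff.mp hi with hi | rfl
    · exact (h.visited_le i hi).trans hmv.le
    · exact le_rfl
  · by_cases hwm : w ≤ m
    · obtain ⟨i, hi, hci⟩ := h.visited_of_le w hw hwm
      exact ⟨i, hi.trans j.le_succ, hci⟩
    · exact ⟨j + 1, le_rfl, le_antisymm (hsucc w hw (not_le.mp hwm)) hwv⟩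
  · rw [Finset.card_filter_le_eq_add_one hvT hmv hsucc, hv, List.length_append,
      List.length_singleton]
    have := h.card
    omega

theorem succ_of_not_hasUnvisitedChild (h : DFSState T c j m) (hT : IsPlanarTree T)
    (hc : IsDFS T c) (hj : j < 2 * (T.card - 1)) (hex : ¬ HasUnvisitedChild T c j) :
    DFSState T c (j + 1) m := by
  have hup : c (j + 1) = (c j).dropLast := (hc.2 j hj).2 hex
  have hprefix : c (j + 1) <+: m := hup ▸ (List.dropLast_prefix _).trans h.prefix_max
  have hne_of_child_gt : ∀ q s, q ++ [s] ∈ T → m < q ++ [s] → q ≠ c j := by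
    rintro q s hqs hmq rfl
    exact hex ⟨_, hqs, ⟨s, rfl⟩, fun i hi hci => (hci ▸ h.visited_le i hi).not_gt hmq⟩
  -- At the root with no unvisited child the whole tree is visited, which the count forbids
  -- before time `2 (|T| - 1)`.
  have hne_nil : c j ≠ [] := by
    intro hnil
    have hall : ∀ w ∈ T, w ≤ m := by
      intro w hw
      by_contra! hmw
      obtain ⟨q, s, hq, hqs, hmq, -⟩ := h.exists_child_between hT hw hmw
      rw [hnil, List.prefix_nil] at hq
      exact hne_of_child_gt q s hqs hmq (hq.trans hnil.symm)
    have := h.card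
    rw [Finset.filter_true_of_mem hall, hnil] at this
    simp only [List.length_nil] at this
    omega
  refine ⟨h.mem, fun i hi => ?_, fun w hw hwm => ?_, hprefix, fun q s hq hqs hmq => ?_, ?_⟩
  · rcases Nat.le_add_one_iff.mp hi with hi | rfl
    · exact h.visited_le i hi
    · exact hprefix.le'
  · obtain ⟨i, hi, hci⟩ := h.visited_of_le w hw hwm
    exact ⟨i, hi.trans j.le_succ, hci⟩
  · rw [hup]
    exact (h.prefix_of_child_gt q s hq hqs hmq).prefix_dropLast (hne_of_child_gt q s hqs hmq)
  · rw [hup, List.length_dropLast]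
    have := h.card
    have := List.length_pos_iff.mpr hne_nil
    omega

theorem exists_of_le (hT : IsPlanarTree T) (hc : IsDFS T c) :
    ∀ j ≤ 2 * (T.card - 1), ∃ m, DFSState T c j m
  | 0, _ => ⟨[], zero hT hc⟩
  | j + 1, hj => by
    obtain ⟨m, h⟩ := exists_of_le hT hc j (by omega)
    by_cases hex : HasUnvisitedChild T c j
    · exact ⟨_, h.succ_of_hasUnvisitedChild hT hc (by omega) hex⟩
    · exact ⟨m, h.succ_of_not_hasUnvisitedChild hT hc (by omega) hex⟩

end DFSState

section FirstVisit

variable {T : Finset (List ℕ)} {c : ℕ → List ℕ}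

theorem IsDFS.exists_visit_le (hc : IsDFS T c) (hT : IsPlanarTree T) {w : List ℕ} (hw : w ∈ T) :
    ∃ i ≤ 2 * (T.card - 1), c i = w := by
  obtain ⟨m, h⟩ := DFSState.exists_of_le hT hc _ le_rfl
  have hcard : (T.filter (· ≤ m)).card = T.card := by
    have := h.card
    have := Finset.card_filter_le T (· ≤ m)
    omega
  exact h.visited_of_le w hw (Finset.filter_card_eq hcard w hw)

theorem c_mT (hc : IsDFS T c) (hT : IsPlanarTree T) {p : ℕ} (hp : p < T.card) :
    c (mT T c p) = vtx T p := by
  obtain ⟨i, -, hci⟩ := hc.exists_visit_le hT (vtx_mem hp)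
  exact Nat.sInf_mem (s := {j | c j = vtx T p}) ⟨i, hci⟩

theorem mT_le (hc : IsDFS T c) (hT : IsPlanarTree T) {p : ℕ} (hp : p < T.card) :
    mT T c p ≤ 2 * (T.card - 1) := by
  obtain ⟨i, hi, hci⟩ := hc.exists_visit_le hT (vtx_mem hp)
  exact (Nat.sInf_le hci).trans hi

theorem ne_vtx_of_lt_mT {p i : ℕ} (hi : i < mT T c p) : c i ≠ vtx T p :=
  Nat.notMem_of_lt_sInf hi

end FirstVisit

/-- for a planar tree `T`, its depth-first traversal `c` and any `p`, for
`m_T(p) ≤ k ≤ m_T(p+1) - 1` the contour process `C_T(k) = |c(k)|` satisfies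
`H_T(p+1) - 1 ≤ C_T(k) ≤ H_T(p)`. -/
theorem contour_between_visits (T : Finset (List ℕ)) (hT : IsPlanarTree T)
    (c : ℕ → List ℕ) (hc : IsDFS T c) (p k : ℕ) (hp : p + 1 ≤ T.card - 1)
    (hk1 : mT T c p ≤ k) (hk2 : k < mT T c (p+1)) :
    HT T (p+1) ≤ (c k).length + 1 ∧ (c k).length ≤ HT T p := by
  have hpT : p + 1 < T.card := by omega
  obtain ⟨m, h⟩ := DFSState.exists_of_le hT hc k ((hk2.trans_le (mT_le hc hT hpT)).le)
  have hm_lt : m < vtx T (p + 1) := by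
    by_contra! hle
    obtain ⟨i, hi, hci⟩ := h.visited_of_le _ (vtx_mem hpT) hle
    exact ne_vtx_of_lt_mT (hi.trans_lt hk2) hci
  have hm : m = vtx T p := by
    refine le_antisymm ?_ (c_mT hc hT (p := p) (by omega) ▸ h.visited_le _ hk1)
    exact not_lt.mp fun hlt => (vtx_succ_le_of_vtx_lt hpT h.mem hlt).not_gt hm_lt
  subst hm
  obtain ⟨q, s, hq, hqs, hlt, hle⟩ :=
    h.exists_child_between hT (vtx_mem hpT) (vtx_lt_vtx_succ hpT)
  have hnext : q ++ [s] = vtx T (p + 1) := le_antisymm hle (vtx_succ_le_of_vtx_lt hpT hqs hlt)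
  refine ⟨?_, h.prefix_max.length_le⟩
  rw [HT, ← hnext, List.length_append, List.length_singleton]
  exact Nat.add_le_add_right hq.length_le 1
end
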